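/- Permutation characterization of partition equality (Gelernter's relaxed notion): let M be a finite type of messages and S a finite type of senders, and let f₀, f₁ : M → S assign to each message its sender. Then there exists a permutation π of S with f₁ = π ∘ f₀ if and only if the families of nonempty fibers agree: { f₀ ⁻¹ {s} | s ∈ S, f₀ ⁻¹ {s} ≠ ∅ } = { f₁ ⁻¹ {s} | s ∈ S, f₁ ⁻¹ {s} ≠ ∅ } (as sets of subsets of M). -/

import Mathlib

/-!
Both sides say that `f₀` and `f₁` have the same kernel: the nonempty fibers of a map are the
classes of its kernel, and an equivalence relation is determined by its classes. Conversely,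
two maps with the same kernel have ranges identified through the common quotient; this
bijection between the (finite) sets of active senders extends to a permutation of all senders.
-/

namespace Setoid

variable {α β γ : Type*}

theorem ker_comp_of_injective {g : β → γ} (hg : Function.Injective g) (f : α → β) :
    ker (g ∘ f) = ker f :=
  Setoid.ext fun _ _ => hg.eq_iff

theorem setOf_preimage_singleton_ne_empty_eq_classes_ker (f : α → β) :
    {T : Set α | ∃ b : β, T = f ⁻¹' {b} ∧ T ≠ ∅} = (ker f).classes := by
  ext T
  constructor
  · rintro ⟨b, rfl, hne⟩
    obtain ⟨a, rfl⟩ := Set.nonempty_iff_ne_empty.mpr hne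
    exact ⟨a, rfl⟩
  · rintro ⟨a, rfl⟩
    exact ⟨f a, rfl, Set.nonempty_iff_ne_empty.mp ⟨a, rfl⟩⟩

noncomputable def rangeEquivOfKerEq {f₀ : α → β} {f₁ : α → γ} (h : ker f₀ = ker f₁) :
    Set.range f₀ ≃ Set.range f₁ :=
  (quotientKerEquivRange f₀).symm.trans <|
    (Quotient.congrRight (Setoid.ext_iff.1 h)).trans (quotientKerEquivRange f₁)

theorem rangeEquivOfKerEq_apply {f₀ : α → β} {f₁ : α → γ} (h : ker f₀ = ker f₁) (a : α) :
    rangeEquivOfKerEq h ⟨f₀ a, a, rfl⟩ = ⟨f₁ a, a, rfl⟩ := by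
  have hsymm : (quotientKerEquivRange f₀).symm ⟨f₀ a, a, rfl⟩ = ⟦a⟧ :=
    (Equiv.symm_apply_eq _).2 rfl
  simp only [rangeEquivOfKerEq, Equiv.trans_apply, hsymm]
  rfl

theorem exists_perm_comp_eq_iff_ker_eq (f₀ f₁ : α → β) [Finite (Set.range f₀)] :
    (∃ π : Equiv.Perm β, f₁ = π ∘ f₀) ↔ ker f₀ = ker f₁ := by
  classical
  constructor
  · rintro ⟨π, rfl⟩
    exact (ker_comp_of_injective π.injective f₀).symm
  · intro h
    have : Finite {b | b ∈ Set.range f₀} := ‹Finite (Set.range f₀)›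
    refine ⟨(rangeEquivOfKerEq h).extendSubtype, funext fun a => ?_⟩
    rw [Function.comp_apply, Equiv.extendSubtype_apply_of_mem _ _ ⟨a, rfl⟩,
      rangeEquivOfKerEq_apply]

end Setoid

theorem perm_iff_fiber_partition_eq_general {M S : Type*} [Fintype S]
    (f₀ f₁ : M → S) :
    (∃ π : Equiv.Perm S, f₁ = π ∘ f₀) ↔
      {T : Set M | ∃ s : S, T = f₀ ⁻¹' {s} ∧ T ≠ ∅}
        = {T : Set M | ∃ s : S, T = f₁ ⁻¹' {s} ∧ T ≠ ∅} := by
  rw [Setoid.exists_perm_comp_eq_iff_ker_eq,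
    Setoid.setOf_preimage_singleton_ne_empty_eq_classes_ker,
    Setoid.setOf_preimage_singleton_ne_empty_eq_classes_ker, Setoid.classes_inj]

/-- Permutation characterization of partition equality (Gelernter's relaxed
notion): two sender assignments agree up to a permutation of senders iff their
families of nonempty fibers coincide. -/
theorem perm_iff_fiber_partition_eq {M S : Type*} [Fintype M] [Fintype S]
    (f₀ f₁ : M → S) :
    (∃ π : Equiv.Perm S, f₁ = π ∘ f₀) ↔
      {T : Set M | ∃ s : S, T = f₀ ⁻¹' {s} ∧ T ≠ ∅}
        = {T : Set M | ∃ s : S, T = f₁ ⁻¹' {s} ∧ T ≠ ∅} :=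
  perm_iff_fiber_partition_eq_general f₀ f₁
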